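/- Let A be a commutative unital C*-algebra and let E be a Hilbert C*-module over A possessing an orthonormal basis ε. Let Φ : F(E) → F(E) be a rank-1 preserving A-linear map such that for every x ∈ E there is φ(x) ∈ E with Φ(L_x^{CI}) ⊆ L_{φ(x)}^{CI}, and for every f ∈ E there is r(f) ∈ E with Φ(R_f^{CI}) ⊆ R_{r(f)}^{CI}. Suppose there exist f₁, f₂ ∈ CI such that r(f₁) ≠ α r(f₂) and r(f₂) ≠ β r(f₁) for all α, β ∈ A. Then there exist A-linear maps A, C : E → E such that Φ(θ_{x,f}) = θ_{Ax,Cf} for all x, f ∈ E. -/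

import Mathlib

/-- A (left) Hilbert C*-module structure on `E` over the C*-algebra `A`:
an `A`-valued inner product, `A`-linear in the first variable and conjugate
`A`-linear in the second, positive and definite, compatible with the norm of `E`,
for which `E` is complete. -/
structure HilbertModule (A : Type*) (E : Type*) [CStarAlgebra A]
    [NormedAddCommGroup E] [Module A E] where
  inner : E → E → A
  inner_add_left : ∀ x y z : E, inner (x + y) z = inner x z + inner y z
  inner_smul_left : ∀ (a : A) (x y : E), inner (a • x) y = a * inner x y
  inner_conj_symm : ∀ x y : E, inner y x = star (inner x y)
  inner_self_pos : ∀ x : E, ∃ c : A, inner x x = star c * c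
  inner_self_eq_zero : ∀ x : E, inner x x = 0 → x = 0
  norm_sq_eq : ∀ x : E, ‖x‖ ^ 2 = ‖inner x x‖
  complete : CompleteSpace E

namespace HilbertModule

variable {A E : Type*} [CStarAlgebra A] [NormedAddCommGroup E] [Module A E]
variable (M : HilbertModule A E)

/-- The "rank-one" module map `θ_{x,y} : ξ ↦ ⟨ξ,y⟩x`. -/
def theta (x y : E) : E → E := fun ξ => M.inner ξ y • x

/-- `e : ι → E` is an orthonormal basis: `⟨e i, e j⟩ = δ_{ij}` and every `x`
is the norm-convergent sum `Σ_i ⟨x, e i⟩ • e i`. -/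
structure IsONB {ι : Type*} (e : ι → E) : Prop where
  ortho_self : ∀ i : ι, M.inner (e i) (e i) = 1
  ortho_ne : ∀ i j : ι, i ≠ j → M.inner (e i) (e j) = 0
  total : ∀ x : E, HasSum (fun i => M.inner x (e i) • e i) x

/-- The coordinately invertible elements with respect to the orthonormal basis `e`:
nonzero elements all of whose coordinates are zero or invertible. -/
def CI {ι : Type*} (e : ι → E) : Set E :=
  {x | x ≠ 0 ∧ ∀ i : ι, M.inner (e i) x = 0 ∨ IsUnit (M.inner (e i) x)}

/-- `F(E)`: the `A`-linear span of the rank-one module maps `θ_{x,y}`. -/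
def F : Submodule A (E → E) :=
  Submodule.span A {T : E → E | ∃ x y : E, T = M.theta x y}

theorem theta_mem_F (x y : E) : M.theta x y ∈ M.F :=
  Submodule.subset_span ⟨x, y, rfl⟩

/-- `θ_{x,y}` as an element of `F(E)`. -/
def thetaF (x y : E) : M.F := ⟨M.theta x y, M.theta_mem_F x y⟩

/-- A map `T : E → E` is `A`-linear if it is additive and `A`-homogeneous. -/
def IsALinear (T : E → E) : Prop :=
  (∀ x y : E, T (x + y) = T x + T y) ∧ ∀ (a : A) (x : E), T (a • x) = a • T x

/-- A map `T : E → E` is conjugate `A`-linear if it is additive and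
`T (a • x) = star a • T x`. -/
def IsConjLinear (T : E → E) : Prop :=
  (∀ x y : E, T (x + y) = T x + T y) ∧ ∀ (a : A) (x : E), T (a • x) = star a • T x

/-- An `A`-linear map `Φ : F(E) → F(E)` is rank decreasing if it sends each `θ_{x,y₀}`
with `y₀ ∈ CI` to some `θ_{s,t₀}` with `t₀ ∈ CI`. -/
def RankDecreasing {ι : Type*} (e : ι → E) (Φ : M.F →ₗ[A] M.F) : Prop :=
  ∀ x : E, ∀ y₀ ∈ M.CI e, ∃ s : E, ∃ t₀ ∈ M.CI e,
    (Φ (M.thetaF x y₀) : E → E) = M.theta s t₀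

/-- An `A`-linear map `Φ : F(E) → F(E)` is rank-1 preserving if it is rank decreasing
and moreover `s ≠ 0` whenever `x ≠ 0`. -/
def Rank1Preserving {ι : Type*} (e : ι → E) (Φ : M.F →ₗ[A] M.F) : Prop :=
  ∀ x : E, ∀ y₀ ∈ M.CI e, ∃ s : E, ∃ t₀ ∈ M.CI e,
    (Φ (M.thetaF x y₀) : E → E) = M.theta s t₀ ∧ (x ≠ 0 → s ≠ 0)

end HilbertModule

/-!
Fix `f₁ ∈ CI` and, by `hL`, write `Φ θ_{f₁,g} = θ_{y₀, C g}` for `g ∈ CI`. By `hR` all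
`Φ θ_{h,f}` with `h ∈ CI` share the right factor `r f`, so an equation `Φ θ_{f₁,f} = θ_{y₀,v}`
propagates to `Φ θ_{h,f} = θ_{u_h,v}` for every `h ∈ CI`. Every vector is a sum of two
coordinately invertible ones, so this defines an `A`-linear `A₀` with
`Φ θ_{x,f₁} = θ_{A₀ x, C f₁}`, and rank-one preservation makes `A₀` injective. Comparing
`Φ θ_{h, f₁ + z g}` for all `z ∈ A` at a coordinate where `C f₁` is invertible shows that the
left factor of `Φ θ_{h,g}` is `A₀ h`; decomposing `f` once more gives the `A`-linear `C₀`.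
-/

namespace HilbertModule

section CStarAlgebra

variable {A E ι : Type*} [CStarAlgebra A] [NormedAddCommGroup E] [Module A E]
  (M : HilbertModule A E) {e : ι → E}

theorem inner_add_right (x y z : E) : M.inner x (y + z) = M.inner x y + M.inner x z := by
  rw [M.inner_conj_symm, M.inner_add_left, star_add, ← M.inner_conj_symm, ← M.inner_conj_symm]

theorem inner_smul_right (a : A) (x y : E) : M.inner x (a • y) = M.inner x y * star a := by
  rw [M.inner_conj_symm, M.inner_smul_left, star_mul, ← M.inner_conj_symm]

def innerLeftHom (y : E) : E →+ A :=
  AddMonoidHom.mk' (M.inner · y) fun x x' => M.inner_add_left x x' y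

def innerRightHom (x : E) : E →+ A :=
  AddMonoidHom.mk' (M.inner x) (M.inner_add_right x)

theorem inner_zero_left (y : E) : M.inner 0 y = 0 := map_zero (M.innerLeftHom y)

theorem inner_zero_right (x : E) : M.inner x 0 = 0 := map_zero (M.innerRightHom x)

theorem inner_neg_right (x y : E) : M.inner x (-y) = -M.inner x y :=
  map_neg (M.innerRightHom x) y

theorem inner_sub_right (x y z : E) : M.inner x (y - z) = M.inner x y - M.inner x z :=
  map_sub (M.innerRightHom x) y z

theorem inner_sub_left (x y z : E) : M.inner (x - y) z = M.inner x z - M.inner y z :=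
  map_sub (M.innerLeftHom z) x y

theorem inner_sum_left {κ : Type*} (s : Finset κ) (f : κ → E) (y : E) :
    M.inner (∑ k ∈ s, f k) y = ∑ k ∈ s, M.inner (f k) y :=
  map_sum (M.innerLeftHom y) f s

theorem inner_sum_right {κ : Type*} (s : Finset κ) (f : κ → E) (x : E) :
    M.inner x (∑ k ∈ s, f k) = ∑ k ∈ s, M.inner x (f k) :=
  map_sum (M.innerRightHom x) f s

theorem ext_inner_left {v w : E} (h : ∀ ξ, M.inner ξ v = M.inner ξ w) : v = w := by
  refine sub_eq_zero.mp (M.inner_self_eq_zero _ ?_)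
  rw [M.inner_sub_right, h, sub_self]

theorem theta_add_left (x x' y : E) : M.theta (x + x') y = M.theta x y + M.theta x' y :=
  funext fun _ => smul_add _ _ _

theorem theta_add_right (x y y' : E) : M.theta x (y + y') = M.theta x y + M.theta x y' :=
  funext fun ξ => by simp only [theta, Pi.add_apply, M.inner_add_right, add_smul]

theorem theta_zero_left (y : E) : M.theta 0 y = 0 :=
  funext fun _ => smul_zero _

theorem exists_isUnit_inner_of_mem_CI (he : M.IsONB e) {c : E} (hc : c ∈ M.CI e) :
    ∃ i, IsUnit (M.inner (e i) c) := by
  by_contra! h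
  refine hc.1 ((he.total c).unique ?_)
  convert hasSum_zero with i
  rw [M.inner_conj_symm, (hc.2 i).resolve_right (h i), star_zero, zero_smul]

theorem mem_CI_of_isUnit_inner [Nontrivial A] {g : E} {i₀ : ι} (h₀ : IsUnit (M.inner (e i₀) g))
    (h : ∀ i, M.inner (e i) g = 0 ∨ IsUnit (M.inner (e i) g)) : g ∈ M.CI e :=
  ⟨fun hg => h₀.ne_zero (by rw [hg, M.inner_zero_right]), h⟩

theorem eq_zero_of_smul_eq_zero_of_mem_CI (he : M.IsONB e) {c : E} (hc : c ∈ M.CI e) {a : A}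
    (h : a • c = 0) : a = 0 := by
  obtain ⟨i, hi⟩ := M.exists_isUnit_inner_of_mem_CI he hc
  have : M.inner (a • c) (e i) = 0 := by rw [h, M.inner_conj_symm, M.inner_zero_right, star_zero]
  rw [M.inner_smul_left, M.inner_conj_symm] at this
  exact hi.star.mul_left_eq_zero.mp this

theorem theta_right_cancel (he : M.IsONB e) {w w' c : E} (hc : c ∈ M.CI e)
    (h : M.theta w c = M.theta w' c) : w = w' := by
  obtain ⟨i, hi⟩ := M.exists_isUnit_inner_of_mem_CI he hc
  exact hi.smul_left_cancel.mp (congrFun h (e i))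

theorem theta_left_cancel {y v v' : E} (hy : ∀ a : A, a • y = 0 → a = 0)
    (h : M.theta y v = M.theta y v') : v = v' :=
  M.ext_inner_left fun ξ => sub_eq_zero.mp <| hy _ <| by
    rw [sub_smul, sub_eq_zero]
    exact congrFun h ξ

theorem exists_eq_smul_of_theta_eq (he : M.IsONB e) {u v H w : E} (hH : H ∈ M.CI e)
    (h : M.theta u v = M.theta H w) : ∃ m : A, w = m • v := by
  obtain ⟨j, hj⟩ := M.exists_isUnit_inner_of_mem_CI he hH
  obtain ⟨k, hk⟩ := hj.star
  refine ⟨star (M.inner u (e j) * ↑k⁻¹), M.ext_inner_left fun ξ => ?_⟩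
  have hξ : M.inner ξ v * M.inner u (e j) = M.inner ξ w * M.inner H (e j) := by
    simpa only [theta, M.inner_smul_left] using congrArg (M.inner · (e j)) (congrFun h ξ)
  rw [M.inner_smul_right, star_star, ← mul_assoc, hξ, M.inner_conj_symm (e j) H, ← hk, mul_assoc,
    Units.mul_inv, mul_one]

theorem norm_inner_le_of_inner_self_eq_one {u : E} (hu : M.inner u u = 1) (v : E) :
    ‖M.inner u v‖ ≤ ‖v‖ := by
  let _ := CStarAlgebra.spectralOrder A
  let _ := CStarAlgebra.spectralOrderedRing A
  set b := M.inner v u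
  have hbu : M.inner u v = star b := M.inner_conj_symm v u
  obtain ⟨c, hc⟩ := M.inner_self_pos (v - b • u)
  -- `⟨v - b u, v - b u⟩ = ⟨v, v⟩ - b b*` exhibits `b b* ≤ ⟨v, v⟩`
  have hvv : M.inner v v = b * star b + star c * c := by
    rw [← hc, M.inner_sub_left, M.inner_sub_right, M.inner_sub_right, M.inner_smul_left,
      M.inner_smul_left, M.inner_smul_right, M.inner_smul_right, hu, hbu]
    noncomm_ring
  have hle : ‖b‖ ^ 2 ≤ ‖v‖ ^ 2 := by
    rw [M.norm_sq_eq, sq, ← CStarRing.norm_self_mul_star, hvv]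
    exact CStarAlgebra.norm_le_norm_of_nonneg_of_le (mul_star_self_nonneg b)
      (le_add_of_nonneg_right (star_mul_self_nonneg c))
  rw [hbu, norm_star]
  exact (pow_le_pow_iff_left₀ (norm_nonneg _) (norm_nonneg _) two_ne_zero).mp hle

theorem inner_eq_star_of_hasSum (he : M.IsONB e) {c : ι → A} {w : E}
    (h : HasSum (fun i => c i • e i) w) (j : ι) : M.inner (e j) w = star (c j) := by
  have hcont : Continuous (M.innerRightHom (e j)) :=
    AddMonoidHomClass.continuous_of_bound _ 1 fun v => by
      simpa [innerRightHom] using M.norm_inner_le_of_inner_self_eq_one (he.ortho_self j) v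
  have hsum := h.map _ hcont
  refine hsum.unique ?_
  convert hasSum_single j fun i hij => ?_ using 1
  · simp [innerRightHom, M.inner_smul_right, he.ortho_self]
  · simp [innerRightHom, M.inner_smul_right, he.ortho_ne j i hij.symm]

theorem norm_sum_smul_sq (he : M.IsONB e) (c : ι → A) (t : Finset ι) :
    ‖∑ i ∈ t, c i • e i‖ ^ 2 = ‖∑ i ∈ t, c i * star (c i)‖ := by
  classical
  rw [M.norm_sq_eq, M.inner_sum_left]
  refine congrArg _ (Finset.sum_congr rfl fun i hi => ?_)
  rw [M.inner_smul_left, M.inner_sum_right, Finset.sum_eq_single_of_mem i hi fun j _ hji => ?_]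
  · rw [M.inner_smul_right, he.ortho_self, one_mul]
  · rw [M.inner_smul_right, he.ortho_ne i j hji.symm, zero_mul]

theorem summable_smul_of_mul_star_eq (he : M.IsONB e) {c d : ι → A} {η : ι → ℝ}
    (hc : Summable fun i => c i • e i) (hη : Summable η) (hη₀ : ∀ i, 0 ≤ η i)
    (hd : ∀ i, d i * star (d i) = c i * star (c i) + algebraMap ℝ A (η i)) :
    Summable fun i => d i • e i := by
  classical
  have := M.complete
  rw [summable_iff_vanishing_norm]
  intro δ hδ
  obtain ⟨s₁, hs₁⟩ := summable_iff_vanishing_norm.mp hc (δ / 2) (by positivity)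
  obtain ⟨s₂, hs₂⟩ := summable_iff_vanishing_norm.mp hη (δ ^ 2 / 2) (by positivity)
  refine ⟨s₁ ∪ s₂, fun t ht => ?_⟩
  have hc_t := hs₁ t (Finset.disjoint_union_right.mp ht).1
  have hη_t₀ : 0 ≤ ∑ i ∈ t, η i := Finset.sum_nonneg fun i _ => hη₀ i
  have hη_t : ∑ i ∈ t, η i < δ ^ 2 / 2 := by
    simpa [abs_of_nonneg hη_t₀] using hs₂ t (Finset.disjoint_union_right.mp ht).2
  have hsq : ‖∑ i ∈ t, d i • e i‖ ^ 2 < δ ^ 2 := calc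
    ‖∑ i ∈ t, d i • e i‖ ^ 2
        = ‖∑ i ∈ t, c i * star (c i) + algebraMap ℝ A (∑ i ∈ t, η i)‖ := by
          rw [M.norm_sum_smul_sq he, map_sum, ← Finset.sum_add_distrib]
          exact congrArg _ (Finset.sum_congr rfl fun i _ => hd i)
    _ ≤ ‖∑ i ∈ t, c i • e i‖ ^ 2 + ∑ i ∈ t, η i := by
          rw [M.norm_sum_smul_sq he]
          refine (norm_add_le _ _).trans (add_le_add_right ?_ _)
          rcases subsingleton_or_nontrivial A with hA | hA
          · rw [Subsingleton.elim (algebraMap ℝ A _) 0, norm_zero]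
            exact hη_t₀
          · rw [norm_algebraMap', Real.norm_of_nonneg hη_t₀]
    _ < δ ^ 2 := by nlinarith [norm_nonneg (∑ i ∈ t, c i • e i)]
  exact (pow_lt_pow_iff_left₀ (norm_nonneg _) hδ.le two_ne_zero).mp hsq

end CStarAlgebra

end HilbertModule

theorem Set.Countable.exists_pos_summable_indicator {ι : Type*} {s : Set ι} (hs : s.Countable) :
    ∃ ε : ι → ℝ, (∀ i, 0 < ε i) ∧ Summable (s.indicator ε) := by
  obtain ⟨ε, hε, c, hc, -⟩ := hs.exists_pos_hasSum_le one_pos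
  exact ⟨ε, hε, summable_subtype_iff_indicator.mp hc.summable⟩

theorem WeakDual.CharacterSpace.isUnit_of_forall_apply_ne_zero {A : Type*} [NormedCommRing A]
    [NormedAlgebra ℂ A] [CompleteSpace A] {a : A} (h : ∀ χ : WeakDual.characterSpace ℂ A, χ a ≠ 0) :
    IsUnit a := by
  by_contra ha
  obtain ⟨χ, hχ⟩ := CharacterSpace.exists_apply_eq_zero ha
  exact h χ hχ

theorem isUnit_sqrt_star_mul_self_add {A : Type*} [CommCStarAlgebra A] [PartialOrder A]
    [StarOrderedRing A] (b : A) {η : ℝ} (hη : 0 < η) :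
    IsUnit (CFC.sqrt (star b * b + algebraMap ℝ A η)) ∧
      IsUnit (b + CFC.sqrt (star b * b + algebraMap ℝ A η)) := by
  set d := CFC.sqrt (star b * b + algebraMap ℝ A η)
  have hd : d * d = star b * b + algebraMap ℝ A η :=
    CFC.sqrt_mul_sqrt_self _ (add_nonneg (star_mul_self_nonneg b) (algebraMap_nonneg A hη.le))
  have hd_sa : star d = d := (IsSelfAdjoint.of_nonneg (CFC.sqrt_nonneg _)).star_eq
  have hχ : ∀ χ : WeakDual.characterSpace ℂ A,
      star (χ d) = χ d ∧ χ d * χ d = star (χ b) * χ b + η := fun χ => by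
    refine ⟨by rw [← map_star, hd_sa], ?_⟩
    rw [← map_mul, hd, map_add, map_mul, map_star, IsScalarTower.algebraMap_apply ℝ ℂ A,
      AlgHomClass.commutes, Algebra.algebraMap_self, RingHom.id_apply,
      Complex.coe_algebraMap]
  have hη' : (η : ℂ) ≠ 0 := Complex.ofReal_ne_zero.mpr hη.ne'
  constructor <;> refine WeakDual.CharacterSpace.isUnit_of_forall_apply_ne_zero fun χ hχ0 => ?_
  · obtain ⟨-, hsq⟩ := hχ χ
    rw [hχ0, mul_zero, Complex.star_def, ← Complex.normSq_eq_conj_mul_self] at hsq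
    have : Complex.normSq (χ b) + η = 0 := by exact_mod_cast hsq.symm
    linarith [Complex.normSq_nonneg (χ b)]
  · obtain ⟨hst, hsq⟩ := hχ χ
    -- `χ d = -χ b` is real, so `|χ b|² = (χ d)² = |χ b|² + η`
    have hz : χ b = -χ d := eq_neg_of_add_eq_zero_left (by rwa [map_add] at hχ0)
    have hcz : star (χ b) = -χ d := by rw [hz, star_neg, hst]
    exact hη' (by linear_combination -hsq - χ b * hcz + χ d * hz)

namespace HilbertModule

variable {A E ι : Type*} [CommCStarAlgebra A] [NormedAddCommGroup E] [Module A E]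
  (M : HilbertModule A E) {e : ι → E}

-- Perturb the coordinates `a i` of `x` by `d i = √(a i* a i + η i)`, with `η` summable and
-- positive exactly on `S`, the countable support of `a` plus one index (so that `x = 0` is
-- covered): `a i + d i` and `-d i` are then invertible on `S` and vanish off it.
theorem exists_mem_CI_add_eq [Nontrivial A] [Nonempty ι] (he : M.IsONB e) (x : E) :
    ∃ g₁ ∈ M.CI e, ∃ g₂ ∈ M.CI e, x = g₁ + g₂ := by
  let _ := CStarAlgebra.spectralOrder A
  let _ := CStarAlgebra.spectralOrderedRing A
  set a := fun i => M.inner (e i) x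
  have hx : HasSum (fun i => star (a i) • e i) x := by
    simpa only [a, ← M.inner_conj_symm] using he.total x
  obtain ⟨i₀⟩ := ‹Nonempty ι›
  set S := insert i₀ {i | a i ≠ 0}
  have hS : S.Countable := by
    refine (hx.summable.countable_support.mono fun i hi hzero => ?_).insert i₀
    refine (hi : a i ≠ 0) ?_
    simpa [M.inner_smul_left, he.ortho_self, M.inner_zero_left] using
      congrArg (M.inner · (e i)) hzero
  obtain ⟨ε, hε, hη⟩ := hS.exists_pos_summable_indicator
  set η := S.indicator ε
  set d := fun i => CFC.sqrt (star (a i) * a i + algebraMap ℝ A (η i))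
  have hd_sa : ∀ i, star (d i) = d i := fun i =>
    (IsSelfAdjoint.of_nonneg (CFC.sqrt_nonneg _)).star_eq
  have hd : ∀ i, d i * star (d i) = star (a i) * star (star (a i)) + algebraMap ℝ A (η i) := by
    intro i
    rw [hd_sa, star_star]
    exact CFC.sqrt_mul_sqrt_self _ (add_nonneg (star_mul_self_nonneg _)
      (algebraMap_nonneg A (Set.indicator_nonneg (fun i _ => (hε i).le) i)))
  obtain ⟨w, hw⟩ := M.summable_smul_of_mul_star_eq he hx.summable hη
    (Set.indicator_nonneg fun i _ => (hε i).le) hd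
  have hw_inner : ∀ j, M.inner (e j) w = d j := fun j => by
    rw [M.inner_eq_star_of_hasSum he hw j, hd_sa]
  have hunit : ∀ i ∈ S, IsUnit (d i) ∧ IsUnit (a i + d i) := fun i hi => by
    simpa only [d, η, Set.indicator_of_mem hi] using isUnit_sqrt_star_mul_self_add (a i) (hε i)
  have hzero : ∀ i ∉ S, a i = 0 ∧ d i = 0 := fun i hi => by
    have ha : a i = 0 := not_not.mp fun h => hi (Set.mem_insert_of_mem _ h)
    simp [d, η, Set.indicator_of_notMem hi, ha]
  have hi₀ : i₀ ∈ S := Set.mem_insert _ _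
  refine ⟨x + w, M.mem_CI_of_isUnit_inner (i₀ := i₀) ?_ fun i => ?_,
    -w, M.mem_CI_of_isUnit_inner (i₀ := i₀) ?_ fun i => ?_, by abel⟩
  · simpa only [M.inner_add_right, hw_inner] using (hunit i₀ hi₀).2
  · rw [M.inner_add_right, hw_inner]
    by_cases hi : i ∈ S
    · exact Or.inr (hunit i hi).2
    · rw [(hzero i hi).2, add_zero]
      exact Or.inl (hzero i hi).1
  · simpa only [M.inner_neg_right, hw_inner] using (hunit i₀ hi₀).1.neg
  · rw [M.inner_neg_right, hw_inner]
    by_cases hi : i ∈ S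
    · exact Or.inr (hunit i hi).1.neg
    · exact Or.inl (by rw [(hzero i hi).2, neg_zero])

theorem theta_smul_left (a : A) (x y : E) : M.theta (a • x) y = a • M.theta x y :=
  funext fun ξ => by simp only [theta, Pi.smul_apply, smul_smul, mul_comm]

theorem theta_smul_right (a : A) (x y : E) : M.theta x (a • y) = star a • M.theta x y :=
  funext fun ξ => by simp only [theta, Pi.smul_apply, M.inner_smul_right, smul_smul, mul_comm]

theorem theta_smul_right_eq_theta_star_smul (a : A) (x y : E) :
    M.theta x (a • y) = M.theta (star a • x) y := by
  rw [M.theta_smul_right, M.theta_smul_left]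

theorem eq_of_theta_add_theta_eq (he : M.IsONB e) {u w c c' : E} (hc : c ∈ M.CI e)
    (hc' : c' ∈ M.CI e)
    (h : ∀ z : A, ∃ W, M.theta u c + M.theta w (z • c') = M.theta W (c + z • c')) : u = w := by
  have hcoord : ∀ z W, M.theta u c + M.theta w (z • c') = M.theta W (c + z • c') → ∀ j,
      M.inner (e j) c • u + (M.inner (e j) c' * star z) • w
        = (M.inner (e j) c + M.inner (e j) c' * star z) • W := fun z W hW j => by
    simpa only [theta, Pi.add_apply, M.inner_add_right, M.inner_smul_right] using congrFun hW (e j)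
  obtain ⟨i, hi⟩ := M.exists_isUnit_inner_of_mem_CI he hc
  rcases hc'.2 i with hγ | hγ
  · obtain ⟨W, hW⟩ := h 1
    have huW : u = W := hi.smul_left_cancel.mp (by simpa [hγ] using hcoord 1 W hW i)
    obtain ⟨k, hk⟩ := M.exists_isUnit_inner_of_mem_CI he hc'
    have := hcoord 1 W hW k
    rw [star_one, mul_one, add_smul, ← huW] at this
    exact (hk.smul_left_cancel.mp (add_left_cancel this)).symm
  · -- choose `z` so that the `i`-th coordinate of `c + z • c'` vanishes
    obtain ⟨W, hW⟩ := h (star (-(M.inner (e i) c * ↑hγ.unit⁻¹)))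
    have := hcoord _ W hW i
    rw [star_star, mul_comm, neg_mul, mul_assoc, hγ.val_inv_mul, mul_one, add_neg_cancel, zero_smul,
      neg_smul, ← sub_eq_add_neg, ← smul_sub] at this
    exact sub_eq_zero.mp (hi.smul_left_cancel.mp (this.trans (smul_zero _).symm))

theorem thetaF_add_left (x x' y : E) : M.thetaF (x + x') y = M.thetaF x y + M.thetaF x' y :=
  Subtype.ext (M.theta_add_left x x' y)

theorem thetaF_add_right (x y y' : E) : M.thetaF x (y + y') = M.thetaF x y + M.thetaF x y' :=
  Subtype.ext (M.theta_add_right x y y')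

theorem thetaF_smul_left (a : A) (x y : E) : M.thetaF (a • x) y = a • M.thetaF x y :=
  Subtype.ext (M.theta_smul_left a x y)

theorem thetaF_smul_right (a : A) (x y : E) : M.thetaF x (a • y) = star a • M.thetaF x y :=
  Subtype.ext (M.theta_smul_right a x y)

variable {M} (Φ : M.F →ₗ[A] M.F)

theorem coe_map_thetaF_add_left (x x' y : E) :
    (Φ (M.thetaF (x + x') y) : E → E) = Φ (M.thetaF x y) + Φ (M.thetaF x' y) := by
  rw [M.thetaF_add_left, map_add, Submodule.coe_add]

theorem coe_map_thetaF_add_right (x y y' : E) :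
    (Φ (M.thetaF x (y + y')) : E → E) = Φ (M.thetaF x y) + Φ (M.thetaF x y') := by
  rw [M.thetaF_add_right, map_add, Submodule.coe_add]

theorem coe_map_thetaF_smul_left (a : A) (x y : E) :
    (Φ (M.thetaF (a • x) y) : E → E) = a • (Φ (M.thetaF x y) : E → E) := by
  rw [M.thetaF_smul_left, map_smul, Submodule.coe_smul]

theorem coe_map_thetaF_smul_right (a : A) (x y : E) :
    (Φ (M.thetaF x (a • y)) : E → E) = star a • (Φ (M.thetaF x y) : E → E) := by
  rw [M.thetaF_smul_right, map_smul, Submodule.coe_smul]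

-- All `Φ θ_{h,f}` with `h ∈ CI` share the right factor `r f`, which the single equation
-- `Φ θ_{f₁,f} = θ_{y₀,v}` pins down as a multiple of `v`.
theorem exists_map_thetaF_eq_theta_of_mem_CI {r : E → E}
    (hR : ∀ f : E, ∀ h ∈ M.CI e, ∃ h' ∈ M.CI e, (Φ (M.thetaF h f) : E → E) = M.theta h' (r f))
    (he : M.IsONB e) {f₁ f y₀ v : E} (hf₁ : f₁ ∈ M.CI e)
    (hv : (Φ (M.thetaF f₁ f) : E → E) = M.theta y₀ v) {h : E} (hh : h ∈ M.CI e) :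
    ∃ u, (Φ (M.thetaF h f) : E → E) = M.theta u v := by
  obtain ⟨H, hH, hH'⟩ := hR f f₁ hf₁
  obtain ⟨m, hm⟩ := M.exists_eq_smul_of_theta_eq he hH (hv.symm.trans hH')
  obtain ⟨h', -, hh'⟩ := hR f h hh
  exact ⟨star m • h', by rw [hh', hm, M.theta_smul_right_eq_theta_star_smul]⟩

theorem map_thetaF_eq_theta_of_row_of_column {r : E → E}
    (hR : ∀ f : E, ∀ h ∈ M.CI e, ∃ h' ∈ M.CI e, (Φ (M.thetaF h f) : E → E) = M.theta h' (r f))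
    (he : M.IsONB e) {f₁ g y₀ c₁ v u h : E} (hf₁ : f₁ ∈ M.CI e) (hc₁ : c₁ ∈ M.CI e)
    (hv : v ∈ M.CI e) (hrow₁ : (Φ (M.thetaF f₁ f₁) : E → E) = M.theta y₀ c₁)
    (hrow : (Φ (M.thetaF f₁ g) : E → E) = M.theta y₀ v) (hh : h ∈ M.CI e)
    (hu : (Φ (M.thetaF h f₁) : E → E) = M.theta u c₁) :
    (Φ (M.thetaF h g) : E → E) = M.theta u v := by
  obtain ⟨u', hu'⟩ := exists_map_thetaF_eq_theta_of_mem_CI Φ hR he hf₁ hrow hh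
  suffices u = u' by rw [hu', this]
  refine M.eq_of_theta_add_theta_eq he hc₁ hv fun z => ?_
  have hrow_z : (Φ (M.thetaF f₁ (f₁ + z • g)) : E → E) = M.theta y₀ (c₁ + z • v) := by
    rw [coe_map_thetaF_add_right, coe_map_thetaF_smul_right, hrow₁, hrow, M.theta_add_right,
      M.theta_smul_right]
  obtain ⟨W, hW⟩ := exists_map_thetaF_eq_theta_of_mem_CI Φ hR he hf₁ hrow_z hh
  refine ⟨W, ?_⟩
  rw [← hW, coe_map_thetaF_add_right, coe_map_thetaF_smul_right, hu, hu', M.theta_smul_right]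

theorem Rank1Preserving.eq_zero_of_theta_left_eq_zero (hΦ : M.Rank1Preserving e Φ)
    (he : M.IsONB e) {f c : E} (hf : f ∈ M.CI e) {A₀ : E → E}
    (h : ∀ x, (Φ (M.thetaF x f) : E → E) = M.theta (A₀ x) c) {x : E} (hx : A₀ x = 0) :
    x = 0 := by
  by_contra hne
  obtain ⟨s, t, ht, hst, hs⟩ := hΦ x f hf
  refine hs hne (M.theta_right_cancel he ht ?_)
  rw [← hst, h, hx, M.theta_zero_left, M.theta_zero_left]

variable [Nontrivial A] [Nonempty ι]

theorem exists_isALinear_of_map_thetaF_eq_theta_left (he : M.IsONB e) {f c : E}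
    (hc : c ∈ M.CI e) (h : ∀ g ∈ M.CI e, ∃ u, (Φ (M.thetaF g f) : E → E) = M.theta u c) :
    ∃ A₀ : E → E, IsALinear (A := A) A₀ ∧
      ∀ x, (Φ (M.thetaF x f) : E → E) = M.theta (A₀ x) c := by
  have hex : ∀ x, ∃ u, (Φ (M.thetaF x f) : E → E) = M.theta u c := fun x => by
    obtain ⟨g₁, hg₁, g₂, hg₂, rfl⟩ := M.exists_mem_CI_add_eq he x
    obtain ⟨u₁, hu₁⟩ := h g₁ hg₁
    obtain ⟨u₂, hu₂⟩ := h g₂ hg₂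
    exact ⟨u₁ + u₂, by rw [coe_map_thetaF_add_left, hu₁, hu₂, M.theta_add_left]⟩
  choose A₀ hA₀ using hex
  have huniq : ∀ x u, (Φ (M.thetaF x f) : E → E) = M.theta u c → A₀ x = u :=
    fun x u hu => M.theta_right_cancel he hc ((hA₀ x).symm.trans hu)
  refine ⟨A₀, ⟨fun x x' => huniq _ _ ?_, fun a x => huniq _ _ ?_⟩, hA₀⟩
  · rw [coe_map_thetaF_add_left, hA₀, hA₀, M.theta_add_left]
  · rw [coe_map_thetaF_smul_left, hA₀, M.theta_smul_left]

theorem map_thetaF_eq_theta_of_forall_mem_CI (he : M.IsONB e) {A₀ : E → E}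
    (hA₀ : ∀ x x', A₀ (x + x') = A₀ x + A₀ x') {f v : E}
    (h : ∀ g ∈ M.CI e, (Φ (M.thetaF g f) : E → E) = M.theta (A₀ g) v) (x : E) :
    (Φ (M.thetaF x f) : E → E) = M.theta (A₀ x) v := by
  obtain ⟨g₁, hg₁, g₂, hg₂, rfl⟩ := M.exists_mem_CI_add_eq he x
  rw [coe_map_thetaF_add_left, h g₁ hg₁, h g₂ hg₂, hA₀, M.theta_add_left]

theorem exists_isALinear_of_map_thetaF_eq_theta_right (he : M.IsONB e) {A₀ : E → E} {x₀ : E}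
    (hx₀ : ∀ a : A, a • A₀ x₀ = 0 → a = 0)
    (h : ∀ g ∈ M.CI e, ∃ v, ∀ x, (Φ (M.thetaF x g) : E → E) = M.theta (A₀ x) v) :
    ∃ C₀ : E → E, IsALinear (A := A) C₀ ∧
      ∀ x f, (Φ (M.thetaF x f) : E → E) = M.theta (A₀ x) (C₀ f) := by
  have hex : ∀ f, ∃ v, ∀ x, (Φ (M.thetaF x f) : E → E) = M.theta (A₀ x) v := fun f => by
    obtain ⟨g₁, hg₁, g₂, hg₂, rfl⟩ := M.exists_mem_CI_add_eq he f
    obtain ⟨v₁, hv₁⟩ := h g₁ hg₁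
    obtain ⟨v₂, hv₂⟩ := h g₂ hg₂
    exact ⟨v₁ + v₂, fun x => by rw [coe_map_thetaF_add_right, hv₁, hv₂, M.theta_add_right]⟩
  choose C₀ hC₀ using hex
  have huniq : ∀ f v, (∀ x, (Φ (M.thetaF x f) : E → E) = M.theta (A₀ x) v) → C₀ f = v :=
    fun f v hv => M.theta_left_cancel hx₀ ((hC₀ f x₀).symm.trans (hv x₀))
  refine ⟨C₀, ⟨fun f f' => huniq _ _ fun x => ?_, fun a f => huniq _ _ fun x => ?_⟩,
    fun x f => hC₀ f x⟩
  · rw [coe_map_thetaF_add_right, hC₀, hC₀, M.theta_add_right]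
  · rw [coe_map_thetaF_smul_right, hC₀, M.theta_smul_right]

end HilbertModule

theorem rank1Preserving_form_linear_general {A E ι : Type*} [CommCStarAlgebra A]
    [NormedAddCommGroup E] [Module A E]
    (M : HilbertModule A E) (e : ι → E) (he : M.IsONB e)
    (Φ : M.F →ₗ[A] M.F) (hΦ : M.Rank1Preserving e Φ)
    (hL : ∀ x : E, ∃ y : E, ∀ g ∈ M.CI e, ∃ g' ∈ M.CI e,
        (Φ (M.thetaF x g) : E → E) = M.theta y g')
    (r : E → E)
    (hR : ∀ f : E, ∀ h ∈ M.CI e, ∃ h' ∈ M.CI e,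
        (Φ (M.thetaF h f) : E → E) = M.theta h' (r f))
    (f₁ : E) (hf₁ : f₁ ∈ M.CI e) :
    ∃ A₀ C₀ : E → E, HilbertModule.IsALinear (A := A) A₀ ∧
      HilbertModule.IsALinear (A := A) C₀ ∧
      ∀ x f : E, (Φ (M.thetaF x f) : E → E) = M.theta (A₀ x) (C₀ f) := by
  open HilbertModule in
  have := nontrivial_of_ne f₁ 0 hf₁.1
  have := Module.nontrivial A E
  have : Nonempty ι := (M.exists_isUnit_inner_of_mem_CI he hf₁).nonempty
  obtain ⟨y₀, hy₀⟩ := hL f₁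
  choose C hC_CI hC using hy₀
  have hc₁ := hC_CI f₁ hf₁
  obtain ⟨A₀, hA₀_lin, hA₀⟩ := exists_isALinear_of_map_thetaF_eq_theta_left Φ he hc₁
    fun h hh => exists_map_thetaF_eq_theta_of_mem_CI Φ hR he hf₁ (hC f₁ hf₁) hh
  have hfaithful (a : A) (ha : a • A₀ f₁ = 0) : a = 0 :=
    M.eq_zero_of_smul_eq_zero_of_mem_CI he hf₁
      (hΦ.eq_zero_of_theta_left_eq_zero Φ he hf₁ hA₀ (by rw [hA₀_lin.2, ha]))
  obtain ⟨C₀, hC₀_lin, hC₀⟩ := exists_isALinear_of_map_thetaF_eq_theta_right Φ he hfaithful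
    fun g hg => ⟨C g hg, map_thetaF_eq_theta_of_forall_mem_CI Φ he hA₀_lin.1 fun h hh =>
      map_thetaF_eq_theta_of_row_of_column Φ hR he hf₁ hc₁ (hC_CI g hg) (hC f₁ hf₁) (hC g hg) hh
        (hA₀ h)⟩
  exact ⟨A₀, C₀, hA₀_lin, hC₀_lin, hC₀⟩

/-- a rank-1 preserving `A`-linear `Φ : F(E) → F(E)` with
`Φ(L_x^{CI}) ⊆ L_{φ(x)}^{CI}` for every `x` and `Φ(R_f^{CI}) ⊆ R_{r(f)}^{CI}` for every `f`,
such that `r(f₁)` and `r(f₂)` are not `A`-multiples of each other for some `f₁, f₂ ∈ CI`,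
is of the form `Φ(θ_{x,f}) = θ_{A x, C f}` for `A`-linear maps `A, C`. -/
theorem rank1Preserving_form_linear {A E ι : Type*} [CommCStarAlgebra A]
    [NormedAddCommGroup E] [Module A E]
    (M : HilbertModule A E) (e : ι → E) (he : M.IsONB e)
    (Φ : M.F →ₗ[A] M.F) (hΦ : M.Rank1Preserving e Φ)
    (hL : ∀ x : E, ∃ y : E, ∀ g ∈ M.CI e, ∃ g' ∈ M.CI e,
        (Φ (M.thetaF x g) : E → E) = M.theta y g')
    (r : E → E)
    (hR : ∀ f : E, ∀ h ∈ M.CI e, ∃ h' ∈ M.CI e,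
        (Φ (M.thetaF h f) : E → E) = M.theta h' (r f))
    (f₁ f₂ : E) (hf₁ : f₁ ∈ M.CI e) (hf₂ : f₂ ∈ M.CI e)
    (hsep₁ : ∀ α : A, r f₁ ≠ α • r f₂) (hsep₂ : ∀ β : A, r f₂ ≠ β • r f₁) :
    ∃ A₀ C₀ : E → E, HilbertModule.IsALinear (A := A) A₀ ∧
      HilbertModule.IsALinear (A := A) C₀ ∧
      ∀ x f : E, (Φ (M.thetaF x f) : E → E) = M.theta (A₀ x) (C₀ f) :=
  rank1Preserving_form_linear_general M e he Φ hΦ hL r hR f₁ hf₁
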